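/- arXiv:2105.08758 — 2 statements merged into one kernel-verified Lean document; each statement's English description precedes it below -/
import Mathlib

section
/- For any finite simple undirected graph with at least one edge, the global mean of friends of friends satisfies μ_G = μ_D + σ_D²/μ_D. -/
open Finset

variable {V : Type*}

/-- Set of neighbors of `v` as a `Finset` (classical). -/
noncomputable def nbr (G : SimpleGraph V) [Fintype V] (v : V) : Finset V :=
  haveI := Classical.decRel G.Adj
  G.neighborFinset v

/-- Degree of vertex `v`: number of its neighbors. -/
noncomputable def deg (G : SimpleGraph V) [Fintype V] (v : V) : ℕ :=
  (nbr G v).card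

/-- Average degree of the friends of `v`. -/
noncomputable def friendAvg (G : SimpleGraph V) [Fintype V] (v : V) : ℝ :=
  (∑ j ∈ nbr G v, (deg G j : ℝ)) / (deg G v : ℝ)

/-- Mean degree of the network. -/
noncomputable def meanDeg (G : SimpleGraph V) [Fintype V] : ℝ :=
  (∑ i : V, (deg G i : ℝ)) / (Fintype.card V : ℝ)

/-- Local mean: average over vertices of the average friend degree. -/
noncomputable def localMean (G : SimpleGraph V) [Fintype V] : ℝ :=
  (∑ i : V, friendAvg G i) / (Fintype.card V : ℝ)

/-- Global mean: total number of friends of friends over total number of friends. -/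
noncomputable def globalMean (G : SimpleGraph V) [Fintype V] : ℝ :=
  (∑ i : V, ∑ j ∈ nbr G i, (deg G j : ℝ)) / (∑ i : V, (deg G i : ℝ))

/-- Number of (undirected) edges. -/
noncomputable def edgeCount (G : SimpleGraph V) [Fintype V] : ℕ :=
  Nat.card G.edgeSet

/-- m-th moment of the degree distribution. -/
noncomputable def kappa (G : SimpleGraph V) [Fintype V] (m : ℤ) : ℝ :=
  (∑ i : V, (deg G i : ℝ) ^ m) / (Fintype.card V : ℝ)

/-- Variance of the degree distribution. -/
noncomputable def varDeg (G : SimpleGraph V) [Fintype V] : ℝ :=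
  (∑ i : V, ((deg G i : ℝ) - meanDeg G) ^ 2) / (Fintype.card V : ℝ)

lemma mem_nbr (G : SimpleGraph V) [Fintype V] (i j : V) : j ∈ nbr G i ↔ G.Adj i j := by
  simp [nbr]

lemma swap_sum (G : SimpleGraph V) [Fintype V] (f : V → ℝ) :
    ∑ i : V, ∑ j ∈ nbr G i, f j = ∑ j : V, (deg G j : ℝ) * f j := by
  classical
  calc ∑ i : V, ∑ j ∈ nbr G i, f j
      = ∑ i : V, ∑ j : V, if j ∈ nbr G i then f j else 0 := by
        refine Finset.sum_congr rfl fun i _ => ?_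
        rw [Finset.sum_ite_mem, Finset.univ_inter]
    _ = ∑ j : V, ∑ i : V, if j ∈ nbr G i then f j else 0 := Finset.sum_comm
    _ = ∑ j : V, (deg G j : ℝ) * f j := by
        refine Finset.sum_congr rfl fun j _ => ?_
        have h : ∀ i, (j ∈ nbr G i) ↔ i ∈ nbr G j := by
          intro i; rw [mem_nbr, mem_nbr, SimpleGraph.adj_comm]
        simp only [h]
        rw [Finset.sum_ite_mem, Finset.univ_inter, Finset.sum_const, deg, nsmul_eq_mul]

/-- For any finite simple undirected graph with at least one edge, the global mean
of friends of friends satisfies `μ_G = μ_D + σ_D² / μ_D`. -/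
theorem stmt2 {V : Type*} [Fintype V] (G : SimpleGraph V) (hE : G.edgeSet.Nonempty) :
    globalMean G = meanDeg G + varDeg G / meanDeg G := by
    classical
  obtain ⟨e, he⟩ := hE
  induction e using Sym2.ind with | _ a b => ?_
  have hab : G.Adj a b := he
  have hdeg : 0 < deg G a := Finset.card_pos.2 ⟨b, (mem_nbr G a b).2 hab⟩
  set N : ℝ := (Fintype.card V : ℝ)
  set S : ℝ := ∑ i : V, (deg G i : ℝ) with hSdef
  set Q : ℝ := ∑ i : V, (deg G i : ℝ) * (deg G i : ℝ) with hQdef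
  have hN : N ≠ 0 := by
    have : 0 < Fintype.card V := Fintype.card_pos_iff.2 ⟨a⟩
    positivity
  have hS : 0 < S := by
    apply Finset.sum_pos' (fun i _ => by positivity)
    exact ⟨a, Finset.mem_univ a, by exact_mod_cast hdeg⟩
  have hS' : S ≠ 0 := ne_of_gt hS
  have hnum : ∑ i : V, ∑ j ∈ nbr G i, (deg G j : ℝ) = Q := swap_sum G _
  have hmean : meanDeg G = S / N := rfl
  have hvar : varDeg G = (Q - S ^ 2 / N) / N := by
    rw [varDeg]
    congr 1
    have : ∑ i : V, ((deg G i : ℝ) - meanDeg G) ^ 2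
        = Q - 2 * meanDeg G * S + N * meanDeg G ^ 2 := by
      have h2 : ∀ i : V, ((deg G i : ℝ) - meanDeg G) ^ 2
          = (deg G i : ℝ) * (deg G i : ℝ) - 2 * meanDeg G * (deg G i : ℝ) + meanDeg G ^ 2 := by
        intro i; ring
      simp only [h2, Finset.sum_add_distrib, Finset.sum_sub_distrib, ← Finset.mul_sum,
        Finset.sum_const, Finset.card_univ, nsmul_eq_mul]
      try rw [← hQdef]
      try rw [← hSdef]
      try ring
    rw [this, hmean]
    field_simp
    ring
  rw [globalMean, hnum, ← hSdef, hmean, hvar]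
  field_simp
  ring
end

section
/- Let G=(V,E) be a finite connected simple undirected graph with N > 3 vertices whose degree sequence is non-constant. If G attains the maximum local mean among all graphs on the vertex set V having the same degree function as G (i.e. μ_L(H) ≤ μ_L(G) for every graph H=(V,E_H) with D_i(H) = D_i(G) for all i ∈ V), then some vertex of minimum degree is adjacent in G to some vertex of maximum degree. -/
/-!
Suppose no vertex `u` of minimum degree is adjacent to a vertex `w` of maximum degree. By
connectivity `u` has a neighbour `x`, and `D_x < D_w` because `x` is adjacent to `u`. Hence `w` has
a neighbour `y ∉ {x} ∪ N(x) \ {u}`, and `D_u < D_y` because `y` is adjacent to `w`. Exchanging the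
edges `ux`, `wy` for `uw`, `xy` keeps every degree and changes `N μ_L` by
`(D_w - D_x)/D_u + (D_u - D_y)/D_w + (D_y - D_u)/D_x + (D_x - D_w)/D_y`
`  = (D_w - D_x)(D_y - D_u)(D_w D_x + D_u D_y)/(D_u D_w D_x D_y) > 0`,
contradicting maximality.
-/

open Finset

variable {V : Type*}

lemma swap_gain_pos {a b c d : ℝ} (ha : 0 < a) (hb : 0 < b) (hc : 0 < c) (hd : 0 < d)
    (hcb : c < b) (had : a < d) :
    0 < (b - c) / a + (a - d) / b + (d - a) / c + (c - b) / d := by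
  have key : (b - c) / a + (a - d) / b + (d - a) / c + (c - b) / d
      = (b - c) * (d - a) * (b * c + a * d) / (a * b * c * d) := by
    field_simp; ring
  have : 0 < b - c := by linarith
  have : 0 < d - a := by linarith
  rw [key]
  positivity

def edgeSwap (G : SimpleGraph V) (u x w y : V) : SimpleGraph V :=
  G.deleteEdges {s(u, x), s(w, y)} ⊔ SimpleGraph.fromEdgeSet {s(u, w), s(x, y)}

lemma edgeSwap_comm (G : SimpleGraph V) (u x w y : V) :
    edgeSwap G w y u x = edgeSwap G u x w y := by
  rw [edgeSwap, edgeSwap, Set.pair_comm, Sym2.eq_swap (a := w) (b := u),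
    Sym2.eq_swap (a := y) (b := x)]

lemma edgeSwap_flip (G : SimpleGraph V) (u x w y : V) :
    edgeSwap G x u y w = edgeSwap G u x w y := by
  rw [edgeSwap, edgeSwap, Set.pair_comm s(x, y), Sym2.eq_swap (a := x) (b := u),
    Sym2.eq_swap (a := y) (b := w)]

structure IsSwappable (G : SimpleGraph V) (u x w y : V) : Prop where
  adj_ux : G.Adj u x
  adj_wy : G.Adj w y
  compl_adj_uw : Gᶜ.Adj u w
  compl_adj_xy : Gᶜ.Adj x y
  ne_uy : u ≠ y
  ne_xw : x ≠ w

namespace IsSwappable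

variable {G : SimpleGraph V} {u x w y : V}

lemma symm (h : IsSwappable G u x w y) : IsSwappable G w y u x :=
  ⟨h.adj_wy, h.adj_ux, h.compl_adj_uw.symm, h.compl_adj_xy.symm, h.ne_xw.symm, h.ne_uy.symm⟩

lemma flip (h : IsSwappable G u x w y) : IsSwappable G x u y w :=
  ⟨h.adj_ux.symm, h.adj_wy.symm, h.compl_adj_xy, h.compl_adj_uw, h.ne_xw, h.ne_uy⟩

end IsSwappable

section Fintype

variable [Fintype V] {G : SimpleGraph V} {u v w x y a : V}

lemma mem_nbr_s15 : a ∈ nbr G v ↔ G.Adj v a := by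
  simp [nbr]

lemma deg_pos_of_adj (h : G.Adj v a) : 0 < deg G v :=
  card_pos.mpr ⟨a, mem_nbr_s15.mpr h⟩

lemma nbr_edgeSwap_of_ne (hu : v ≠ u) (hx : v ≠ x) (hw : v ≠ w) (hy : v ≠ y) :
    nbr (edgeSwap G u x w y) v = nbr G v := by
  ext j
  simp only [mem_nbr_s15, edgeSwap, SimpleGraph.sup_adj, SimpleGraph.deleteEdges_adj,
    SimpleGraph.fromEdgeSet_adj, Set.mem_insert_iff, Set.mem_singleton_iff, Sym2.eq_iff]
  grind

lemma deg_edgeSwap_of_ne (hu : v ≠ u) (hx : v ≠ x) (hw : v ≠ w) (hy : v ≠ y) :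
    deg (edgeSwap G u x w y) v = deg G v := by
  rw [deg, deg, nbr_edgeSwap_of_ne hu hx hw hy]

lemma friendAvg_edgeSwap_of_ne (hdeg : ∀ v, deg (edgeSwap G u x w y) v = deg G v)
    (hu : v ≠ u) (hx : v ≠ x) (hw : v ≠ w) (hy : v ≠ y) :
    friendAvg (edgeSwap G u x w y) v = friendAvg G v := by
  simp only [friendAvg, hdeg, nbr_edgeSwap_of_ne hu hx hw hy]

variable [DecidableEq V]

namespace IsSwappable

lemma nbr_edgeSwap_left (h : IsSwappable G u x w y) :
    nbr (edgeSwap G u x w y) u = insert w ((nbr G u).erase x) := by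
  have hux := h.adj_ux.ne
  have huw := h.compl_adj_uw.ne
  have huy := h.ne_uy
  ext j
  simp only [mem_nbr_s15, edgeSwap, SimpleGraph.sup_adj, SimpleGraph.deleteEdges_adj,
    SimpleGraph.fromEdgeSet_adj, Set.mem_insert_iff, Set.mem_singleton_iff, Sym2.eq_iff,
    mem_insert, mem_erase]
  grind

lemma notMem_erase_nbr (h : IsSwappable G u x w y) : w ∉ (nbr G u).erase x :=
  fun hw => ((G.compl_adj u w).1 h.compl_adj_uw).2 (mem_nbr_s15.1 (mem_of_mem_erase hw))

lemma deg_edgeSwap_left (h : IsSwappable G u x w y) :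
    deg (edgeSwap G u x w y) u = deg G u := by
  rw [deg, h.nbr_edgeSwap_left, card_insert_of_notMem h.notMem_erase_nbr,
    card_erase_add_one (mem_nbr_s15.2 h.adj_ux), deg]

lemma deg_edgeSwap (h : IsSwappable G u x w y) (v : V) :
    deg (edgeSwap G u x w y) v = deg G v := by
  by_cases hu : v = u
  · subst hu; exact h.deg_edgeSwap_left
  by_cases hw : v = w
  · subst hw; rw [← edgeSwap_comm]; exact h.symm.deg_edgeSwap_left
  by_cases hx : v = x
  · subst hx; rw [← edgeSwap_flip]; exact h.flip.deg_edgeSwap_left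
  by_cases hy : v = y
  · subst hy; rw [← edgeSwap_flip, ← edgeSwap_comm]; exact h.flip.symm.deg_edgeSwap_left
  exact deg_edgeSwap_of_ne hu hx hw hy

lemma friendAvg_edgeSwap_left (h : IsSwappable G u x w y) :
    friendAvg (edgeSwap G u x w y) u =
      friendAvg G u + ((deg G w : ℝ) - deg G x) / deg G u := by
  simp only [friendAvg, h.deg_edgeSwap, h.nbr_edgeSwap_left]
  rw [sum_insert h.notMem_erase_nbr, sum_erase_eq_sub (mem_nbr_s15.2 h.adj_ux)]
  ring

lemma localMean_edgeSwap (h : IsSwappable G u x w y) :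
    localMean (edgeSwap G u x w y) = localMean G +
      (((deg G w : ℝ) - deg G x) / deg G u + ((deg G u : ℝ) - deg G y) / deg G w +
        ((deg G y : ℝ) - deg G u) / deg G x + ((deg G x : ℝ) - deg G w) / deg G y) /
        Fintype.card V := by
  have hsum : ∑ v, friendAvg (edgeSwap G u x w y) v - ∑ v, friendAvg G v =
      ∑ v ∈ {u, w, x, y}, (friendAvg (edgeSwap G u x w y) v - friendAvg G v) := by
    rw [← sum_sub_distrib]
    refine (sum_subset (subset_univ _) fun v _ hv => ?_).symm
    simp only [mem_insert, mem_singleton, not_or] at hv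
    rw [friendAvg_edgeSwap_of_ne h.deg_edgeSwap hv.1 hv.2.2.1 hv.2.1 hv.2.2.2, sub_self]
  have hFw := h.symm.friendAvg_edgeSwap_left
  have hFx := h.flip.friendAvg_edgeSwap_left
  have hFy := h.flip.symm.friendAvg_edgeSwap_left
  rw [edgeSwap_comm] at hFw
  rw [edgeSwap_flip] at hFx
  rw [edgeSwap_comm, edgeSwap_flip] at hFy
  rw [sum_insert (by simp [h.compl_adj_uw.ne, h.adj_ux.ne, h.ne_uy]),
    sum_insert (by simp [h.ne_xw.symm, h.adj_wy.ne]), sum_insert (by simp [h.compl_adj_xy.ne]),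
    sum_singleton, h.friendAvg_edgeSwap_left, hFw, hFx, hFy,
    sub_eq_iff_eq_add'] at hsum
  rw [localMean, localMean, hsum, add_div]
  ring

lemma localMean_lt_edgeSwap (h : IsSwappable G u x w y)
    (hxw : deg G x < deg G w) (huy : deg G u < deg G y) :
    localMean G < localMean (edgeSwap G u x w y) := by
  have : Nonempty V := ⟨u⟩
  rw [h.localMean_edgeSwap, lt_add_iff_pos_right]
  refine div_pos (swap_gain_pos ?_ ?_ ?_ ?_ (by exact_mod_cast hxw) (by exact_mod_cast huy))
    (by exact_mod_cast Fintype.card_pos)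
  · exact_mod_cast deg_pos_of_adj h.adj_ux
  · exact_mod_cast deg_pos_of_adj h.adj_wy
  · exact_mod_cast deg_pos_of_adj h.adj_ux.symm
  · exact_mod_cast deg_pos_of_adj h.adj_wy.symm

end IsSwappable

lemma exists_isSwappable (hconn : G.Connected) (hu : ∀ v, deg G u ≤ deg G v)
    (hw : ∀ v, deg G v ≤ deg G w) (huw : deg G u < deg G w)
    (hno : ∀ u' w', (∀ v, deg G u' ≤ deg G v) → (∀ v, deg G v ≤ deg G w') → ¬ G.Adj u' w') :
    ∃ x y, IsSwappable G u x w y ∧ deg G x < deg G w ∧ deg G u < deg G y := by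
  have huw_ne : u ≠ w := fun h => huw.ne (congrArg _ h)
  obtain ⟨x, hux⟩ := (hconn.preconnected u w).nonempty_neighborSet_left huw_ne
  have hxw : deg G x < deg G w := by
    by_contra! hle
    exact hno u x hu (fun v => (hw v).trans hle) hux
  have hcard : #(insert x ((nbr G x).erase u)) < #(nbr G w) :=
    ((card_insert_le _ _).trans_eq (card_erase_add_one (mem_nbr_s15.2 hux.symm))).trans_lt hxw
  obtain ⟨y, hwy, hy⟩ := exists_mem_notMem_of_card_lt_card hcard
  rw [mem_nbr_s15] at hwy
  rw [mem_insert, mem_erase, mem_nbr_s15, not_or, not_and] at hy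
  have hyu : y ≠ u := fun h => hno u w hu hw (h ▸ hwy.symm)
  refine ⟨x, y, ⟨hux, hwy, (G.compl_adj u w).2 ⟨huw_ne, hno u w hu hw⟩,
    (G.compl_adj x y).2 ⟨Ne.symm hy.1, hy.2 hyu⟩, hyu.symm, fun h => hxw.ne (congrArg _ h)⟩,
    hxw, ?_⟩
  by_contra! hle
  exact hno y w (fun v => hle.trans (hu v)) hw hwy.symm

end Fintype

theorem stmt15_general {V : Type*} [Fintype V] (G : SimpleGraph V)
    (hconn : G.Connected)
    (hnonconst : ¬ ∀ v w : V, deg G v = deg G w)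
    (hmax : ∀ H : SimpleGraph V, (∀ v : V, deg H v = deg G v) → localMean H ≤ localMean G) :
    ∃ u w : V, (∀ v : V, deg G u ≤ deg G v) ∧ (∀ v : V, deg G v ≤ deg G w) ∧
      G.Adj u w := by
  classical
  by_contra! hno
  obtain ⟨p, q, hpq⟩ : ∃ p q, deg G p ≠ deg G q := by simpa using hnonconst
  have : Nonempty V := ⟨p⟩
  obtain ⟨u, -, hu⟩ := exists_min_image univ (deg G) univ_nonempty
  obtain ⟨w, -, hw⟩ := exists_max_image univ (deg G) univ_nonempty
  have huw : deg G u < deg G w := by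
    have := hu p (mem_univ p); have := hu q (mem_univ q)
    have := hw p (mem_univ p); have := hw q (mem_univ q)
    omega
  obtain ⟨x, y, hswap, hxw, huy⟩ :=
    exists_isSwappable hconn (fun v => hu v (mem_univ v)) (fun v => hw v (mem_univ v)) huw hno
  exact (hswap.localMean_lt_edgeSwap hxw huy).not_ge (hmax _ hswap.deg_edgeSwap)

/-- If a connected graph `G` on more than 3 vertices with non-constant degree sequence
attains the maximum local mean among all graphs on `V` with the same degree function,
then some vertex of minimum degree is adjacent to some vertex of maximum degree. -/
theorem stmt15 {V : Type*} [Fintype V] (G : SimpleGraph V)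
    (hN : 3 < Fintype.card V) (hconn : G.Connected)
    (hnonconst : ¬ ∀ v w : V, deg G v = deg G w)
    (hmax : ∀ H : SimpleGraph V, (∀ v : V, deg H v = deg G v) → localMean H ≤ localMean G) :
    ∃ u w : V, (∀ v : V, deg G u ≤ deg G v) ∧ (∀ v : V, deg G v ≤ deg G w) ∧
      G.Adj u w :=
  stmt15_general G hconn hnonconst hmax
end
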